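/- Let K/k be a q-finite purely inseparable extension of characteristic p > 0 that is unbounded (of infinite exponent). Then the relative perfect closure rp(K/k) is also of unbounded exponent over k; in particular rp(K/k) ≠ k. -/

import Mathlib

/-!
Common definitions: purely inseparable extension theory (r-bases, degree of
irrationality, relative perfect closure, modularity), following Fliouet,
"Extensions absolument lq-finies".
-/

open IntermediateField

noncomputable section

/-- `k(K^p)`: the intermediate field of `K/k` generated by the `p`-th powers of `K`. -/
def pClosure (k K : Type*) [Field k] [Field K] [Algebra k K] (p : ℕ) : IntermediateField k K :=
  adjoin k {x : K | ∃ y : K, y ^ p = x}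

/-- `k(K^{p^n})`. -/
def pnClosure (k K : Type*) [Field k] [Field K] [Algebra k K] (p n : ℕ) : IntermediateField k K :=
  adjoin k {x : K | ∃ y : K, y ^ p ^ n = x}

/-- `k(L^p)` for an intermediate field `L` of `Ω/k`. -/
def pClosureOf {k Ω : Type*} [Field k] [Field Ω] [Algebra k Ω] (p : ℕ)
    (L : IntermediateField k Ω) : IntermediateField k Ω :=
  adjoin k {x : Ω | ∃ y ∈ L, y ^ p = x}

/-- `B` is `r`-free over the intermediate field `L` (typically `L = k(K^p)`):
no `x ∈ B` belongs to `L(B \ {x})`. -/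
def RFreeOver {k K : Type*} [Field k] [Field K] [Algebra k K]
    (L : IntermediateField k K) (B : Set K) : Prop :=
  ∀ x ∈ B, x ∉ adjoin L (B \ {x})

/-- `B` is an `r`-basis of `K/k` : `K = k(K^p)(B)` and `B` is `r`-free over `k(K^p)`. -/
def RBasis (k K : Type*) [Field k] [Field K] [Algebra k K] (p : ℕ) (B : Set K) : Prop :=
  adjoin (pClosure k K p) B = ⊤ ∧ RFreeOver (pClosure k K p) B

/-- `B` is an `r`-basis of `L/F` where `F ≤ L` are intermediate fields of `Ω/k`:
`L = F(L^p)(B)` and no `x ∈ B` lies in `F(L^p)(B \ {x})`. -/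
def RBasisRel {k Ω : Type*} [Field k] [Field Ω] [Algebra k Ω] (p : ℕ)
    (F L : IntermediateField k Ω) (B : Set Ω) : Prop :=
  B ⊆ (L : Set Ω) ∧ F ⊔ pClosureOf p L ⊔ adjoin k B = L ∧
    ∀ x ∈ B, x ∉ F ⊔ pClosureOf p L ⊔ adjoin k (B \ {x})

/-- The degree of irrationality of a bounded-exponent extension:
the cardinality of an `r`-basis of `K/k`. -/
def diCard (k K : Type*) [Field k] [Field K] [Algebra k K] (p : ℕ) : Cardinal :=
  sInf {c : Cardinal | ∃ B : Set K, RBasis k K p B ∧ Cardinal.mk B = c}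

/-- `k^{p^{-n}} ∩ K = {x ∈ K | x^{p^n} ∈ k}`. -/
def expleq (k K : Type*) [Field k] [Field K] [Algebra k K] (p n : ℕ) : IntermediateField k K :=
  adjoin k {x : K | x ^ p ^ n ∈ (algebraMap k K).range}

/-- The degree of irrationality `di(K/k) = sup_n di(k^{p^{-n}} ∩ K / k)`. -/
def di (k K : Type*) [Field k] [Field K] [Algebra k K] (p : ℕ) : Cardinal :=
  ⨆ n : ℕ, diCard k (expleq k K p n) p

/-- The relative perfect closure `rp(K/k)`: the largest intermediate field `L`
with `k(L^p) = L`. -/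
def rp (k K : Type*) [Field k] [Field K] [Algebra k K] (p : ℕ) : IntermediateField k K :=
  sSup {L : IntermediateField k K | pClosureOf p L = L}

/-- `K/k` has unbounded exponent. -/
def UnboundedExp (k K : Type*) [Field k] [Field K] [Algebra k K] (p : ℕ) : Prop :=
  ∀ e : ℕ, ∃ x : K, x ^ p ^ e ∉ (algebraMap k K).range

/-- `K^{p^n}` as a subfield of `K`. -/
def pnPowers (K : Type*) [Field K] (p n : ℕ) : Subfield K :=
  Subfield.closure {x : K | ∃ y : K, y ^ p ^ n = x}

/-- `K/k` is modular: for each `n`, `K^{p^n}` and `k` are linearly disjoint over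
`K^{p^n} ∩ k`, i.e. every finite family of elements of `K^{p^n}` that is linearly
independent over `K^{p^n} ∩ k` remains linearly independent over `k`. -/
def Modular (k K : Type*) [Field k] [Field K] [Algebra k K] (p : ℕ) : Prop :=
  ∀ n : ℕ, ∀ s : Finset K, (↑s : Set K) ⊆ (pnPowers K p n : Set K) →
    LinearIndependent ↥(pnPowers K p n ⊓ (algebraMap k K).fieldRange)
      (fun x : s => (x : K)) →
    LinearIndependent ↥((algebraMap k K).fieldRange) (fun x : s => (x : K))

/-- The exponent `o(a, F)` of `a` over an intermediate field `F`:
the least `m` with `a^{p^m} ∈ F`. -/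
def expOf {k K : Type*} [Field k] [Field K] [Algebra k K] (p : ℕ)
    (F : IntermediateField k K) (a : K) : ℕ :=
  sInf {m : ℕ | a ^ p ^ m ∈ F}

/-- An intermediate field `L` of `K/k` is equiexponential of exponent `e` over `k`:
there is an `r`-basis `G` of `L/k` with `o(a, k(G \ {a})) = o(a, k) = e` for all `a ∈ G`. -/
def EquiExpOf {k K : Type*} [Field k] [Field K] [Algebra k K] (p : ℕ)
    (e : ℕ) (L : IntermediateField k K) : Prop :=
  ∃ G : Set K, RBasisRel p ⊥ L G ∧
    ∀ a ∈ G, expOf p (adjoin k (G \ {a})) a = e ∧ expOf p (⊥ : IntermediateField k K) a = e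

end

/-!
Write `Kₘ = k(K^{p^m})`. `r`-bases exist by Teichmüller–Tukey, since `r`-freeness has finite
character and the exchange property (`u ∈ F⟮x⟯` with `u ∉ F` and `u^p, x^p ∈ F` gives
`F⟮u⟯ = F⟮x⟯`, both of degree `p`). If `di(K/k) ≤ d`, each `k^{p^{-e}} ∩ K` thus has an `r`-basis
of at most `d` elements, so every finite subset of `K` lies in some `K₁(B)` with `|B| ≤ d`, and
`[K₁(B) : K₁] ≤ p^d`. Hence `K/K₁` is finite, `K = K₁(S)` with `S` finite, and raising to the
`p^m`-th power gives `Kₘ = Kₘ₊₁(S^{p^m})`. The descending chain `Kₘ ∩ k(S)` inside the finite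
extension `k(S)/k` stabilises; once it does, `S^{p^m} ⊆ Kₘ₊₁`, so `Kₘ = Kₘ₊₁ = k(Kₘ^p)` is
relatively perfect and lies in `rp(K/k)`. As `K/k` is unbounded, so is `Kₘ/k`.
-/

open Module

section PRadical

variable {p : ℕ} [hp : Fact p.Prime] {F K : Type*} [Field F] [Field K] [CharP K p] [Algebra F K]

open Polynomial in
theorem finrank_adjoin_simple_eq_of_pow_mem {u : K} (hu : u ^ p ∈ (⊥ : IntermediateField F K))
    (hu' : u ∉ (⊥ : IntermediateField F K)) : finrank F F⟮u⟯ = p := by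
  obtain ⟨c, hc⟩ := mem_bot.1 hu
  have hmonic : (X ^ p - C c).Monic := monic_X_pow_sub_C c hp.out.ne_zero
  have hroot : aeval u (X ^ p - C c) = 0 := by simp [hc]
  have hirr : Irreducible (X ^ p - C c) := X_pow_sub_C_irreducible_of_prime hp.out fun b hb =>
    hu' (mem_bot.2 ⟨b, frobenius_inj K p (by rw [frobenius_def, frobenius_def, ← map_pow, hb, hc])⟩)
  rw [adjoin.finrank ⟨_, hmonic, hroot⟩, ← minpoly.eq_of_irreducible_of_monic hirr hroot hmonic,
    natDegree_X_pow_sub_C]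

theorem finrank_adjoin_simple_le_of_pow_mem {u : K} (hu : u ^ p ∈ (⊥ : IntermediateField F K)) :
    finrank F F⟮u⟯ ≤ p := by
  by_cases hu' : u ∈ (⊥ : IntermediateField F K)
  · rw [adjoin_simple_eq_bot_iff.2 hu', IntermediateField.finrank_bot]
    exact hp.out.one_le
  · exact (finrank_adjoin_simple_eq_of_pow_mem hu hu').le

theorem finrank_adjoin_finset_le_pow_card (B : Finset K)
    (hB : ∀ b ∈ B, b ^ p ∈ (⊥ : IntermediateField F K)) :
    finrank F (adjoin F (B : Set K)) ≤ p ^ B.card := by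
  classical
  induction B using Finset.induction with
  | empty => rw [Finset.coe_empty, adjoin_empty, IntermediateField.finrank_bot, Finset.card_empty,
      pow_zero]
  | insert b B hb ih =>
    set A := adjoin F (B : Set K)
    have htower : (adjoin A {b}).restrictScalars F = adjoin F (insert b B : Finset K) := by
      rw [adjoin_adjoin_left, Finset.coe_insert, Set.union_singleton]
    have hbA : b ^ p ∈ (⊥ : IntermediateField A K) := by
      obtain ⟨c, hc⟩ := mem_bot.1 (hB b (Finset.mem_insert_self b B))
      exact mem_bot.2 ⟨algebraMap F A c, by rw [← hc]; rfl⟩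
    rw [← htower, Finset.card_insert_of_notMem hb, pow_succ,
      show finrank F ((adjoin A {b}).restrictScalars F) = finrank F (adjoin A {b}) from rfl,
      ← Module.finrank_mul_finrank F A (adjoin A {b})]
    exact Nat.mul_le_mul (ih fun c hc => hB c (Finset.mem_insert_of_mem hc))
      (finrank_adjoin_simple_le_of_pow_mem hbA)

theorem mem_adjoin_simple_comm_of_pow_mem {x u : K} (hx : x ^ p ∈ (⊥ : IntermediateField F K))
    (hu : u ^ p ∈ (⊥ : IntermediateField F K)) (hu' : u ∉ (⊥ : IntermediateField F K))
    (h : u ∈ F⟮x⟯) : x ∈ F⟮u⟯ := by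
  have hx' : x ∉ (⊥ : IntermediateField F K) := fun hx' =>
    hu' (by rwa [adjoin_simple_eq_bot_iff.2 hx'] at h)
  have hdeg := finrank_adjoin_simple_eq_of_pow_mem hx hx'
  have : FiniteDimensional F F⟮x⟯ := Module.finite_of_finrank_pos (hdeg ▸ hp.out.pos)
  rw [eq_of_le_of_finrank_eq (adjoin_simple_le_iff.2 h)
    (by rw [hdeg, finrank_adjoin_simple_eq_of_pow_mem hu hu'])]
  exact mem_adjoin_simple_self F x

end PRadical

section RBasis

variable {k K : Type*} [Field k] [Field K] [Algebra k K]

theorem RFreeOver.mono {L : IntermediateField k K} {B B' : Set K} (hB : RFreeOver L B)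
    (h : B' ⊆ B) : RFreeOver L B' :=
  fun x hx hmem => hB x (h hx) (adjoin.mono _ _ _ (Set.sdiff_subset_sdiff_left h) hmem)

theorem isOfFiniteCharacter_rFreeOver (L : IntermediateField k K) :
    Order.IsOfFiniteCharacter {B : Set K | RFreeOver L B} := by
  refine fun B => ⟨fun hB B' h _ => hB.mono h, fun h x hx hmem => ?_⟩
  obtain ⟨T, hT, hxT⟩ := exists_finset_of_mem_adjoin hmem
  have hxT' : x ∉ (T : Set K) := fun h => (hT h).2 rfl
  refine h (insert x T) (Set.insert_subset hx (hT.trans Set.sdiff_subset))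
    (T.finite_toSet.insert x) x (Set.mem_insert x _) ?_
  rwa [Set.insert_sdiff_self_of_notMem hxT']

theorem pow_mem_pClosure (p : ℕ) (y : K) : y ^ p ∈ pClosure k K p :=
  subset_adjoin _ _ ⟨y, rfl⟩

theorem le_pClosure_sup_adjoin_of_rBasis {p : ℕ} {E : IntermediateField k K} {B : Set E}
    (hB : RBasis k E p B) : E ≤ pClosure k K p ⊔ adjoin k (Subtype.val '' B) := by
  have htop : pClosure k E p ⊔ adjoin k B = ⊤ := by
    rw [← restrictScalars_adjoin_eq_sup, hB.1, restrictScalars_top]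
  have hpow : (pClosure k E p).map E.val ≤ pClosure k K p := by
    rw [pClosure, adjoin_map, adjoin_le_iff]
    rintro _ ⟨_, ⟨y, rfl⟩, rfl⟩
    exact pow_mem_pClosure p (y : K)
  calc E = (⊤ : IntermediateField k E).map E.val := by
        rw [← AlgHom.fieldRange_eq_map, fieldRange_val]
    _ = (pClosure k E p).map E.val ⊔ adjoin k (Subtype.val '' B) := by
      rw [← htop, IntermediateField.map_sup, adjoin_map]; rfl
    _ ≤ _ := sup_le_sup_right hpow _

variable {p : ℕ} [Fact p.Prime] [CharP K p]

theorem RFreeOver.insert {L : IntermediateField k K} {B : Set K} {x : K}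
    (hL : ∀ y : K, y ^ p ∈ L) (hB : RFreeOver L B) (hx : x ∉ adjoin L B) :
    RFreeOver L (insert x B) := by
  rintro u (rfl | huB)
  · exact fun hmem => hx (adjoin.mono _ _ _ (Set.sdiff_singleton_subset_iff.2 subset_rfl) hmem)
  intro hmem
  have hxu : x ≠ u := fun h => hx (h ▸ subset_adjoin _ _ huB)
  set F₀ := adjoin L (B \ {u})
  have hpow : ∀ y : K, y ^ p ∈ (⊥ : IntermediateField F₀ K) := fun y =>
    mem_bot.2 ⟨⟨y ^ p, adjoin.algebraMap_mem L _ ⟨y ^ p, hL y⟩⟩, rfl⟩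
  have huF₀ : u ∉ (⊥ : IntermediateField F₀ K) := fun h => by
    obtain ⟨w, hw⟩ := mem_bot.1 h
    exact hB u huB (hw ▸ w.2 : u ∈ F₀)
  rw [Set.insert_sdiff_of_notMem B (Set.notMem_singleton_iff.2 hxu), ← Set.union_singleton,
    ← adjoin_adjoin_left] at hmem
  have hxu' := mem_adjoin_simple_comm_of_pow_mem (hpow x) (hpow u) huF₀ hmem
  refine hx (adjoin.mono _ _ _ ?_ ((adjoin_adjoin_left L (B \ {u}) {u}).le hxu'))
  exact Set.union_subset Set.sdiff_subset (Set.singleton_subset_iff.2 huB)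

theorem exists_rBasis : ∃ B : Set K, RBasis k K p B := by
  obtain ⟨B, -, hB⟩ := (isOfFiniteCharacter_rFreeOver (pClosure k K p)).exists_maximal
    (show (∅ : Set K) ∈ {B : Set K | RFreeOver (pClosure k K p) B} from fun _ h => h.elim)
  refine ⟨B, eq_top_iff.2 fun x _ => ?_, hB.1⟩
  by_contra hx
  have hfree := hB.1.insert (pow_mem_pClosure p) hx
  exact hx (subset_adjoin _ _ (hB.2 hfree (Set.subset_insert x B) (Set.mem_insert x B)))

theorem exists_rBasis_mk_eq_diCard :
    ∃ B : Set K, RBasis k K p B ∧ Cardinal.mk B = diCard k K p := by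
  obtain ⟨B, hB⟩ := exists_rBasis (k := k) (K := K) (p := p)
  exact csInf_mem (s := {c | ∃ B : Set K, RBasis k K p B ∧ Cardinal.mk B = c}) ⟨_, B, hB, rfl⟩

theorem exists_finset_of_diCard_le {E : IntermediateField k K} {d : ℕ}
    (h : diCard k E p ≤ d) :
    ∃ B : Finset K, B.card ≤ d ∧ E ≤ pClosure k K p ⊔ adjoin k (B : Set K) := by
  obtain ⟨B, hB, hcard⟩ := exists_rBasis_mk_eq_diCard (k := k) (K := E) (p := p)
  have hfin : B.Finite :=
    Cardinal.lt_aleph0_iff_set_finite.1 (hcard ▸ h.trans_lt (Cardinal.natCast_lt_aleph0 (n := d)))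
  refine ⟨hfin.toFinset.map (Function.Embedding.subtype _), ?_, ?_⟩
  · rw [Finset.card_map, ← Set.ncard_eq_toFinset_card B hfin]
    exact_mod_cast ((Set.cast_ncard hfin).trans hcard).le.trans h
  · rw [Finset.coe_map, hfin.coe_toFinset]
    exact le_pClosure_sup_adjoin_of_rBasis hB

end RBasis

section QFinite

variable {p : ℕ} {k K : Type*} [Field k] [Field K] [Algebra k K]

theorem expleq_mono : Monotone (expleq k K p) := fun e e' h =>
  adjoin_le_iff.2 fun x ⟨c, hc⟩ => subset_adjoin _ _
    ⟨c ^ p ^ (e' - e), by rw [map_pow, hc, ← pow_mul, ← pow_add, Nat.add_sub_cancel' h]⟩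

theorem exists_subset_expleq [ExpChar k p] [IsPurelyInseparable k K] (s : Finset K) :
    ∃ e, (s : Set K) ⊆ expleq k K p e := by
  choose n hn using fun x : K => IsPurelyInseparable.pow_mem k p x
  exact ⟨s.sup n, fun x hx => expleq_mono (Finset.le_sup hx) (subset_adjoin _ _ (hn x))⟩

theorem diCard_expleq_le_di (e : ℕ) : diCard k (expleq k K p e) p ≤ di k K p :=
  le_ciSup Cardinal.bddAbove_of_small e

theorem finite_pClosure_of_di_lt_aleph0 [hp : Fact p.Prime] [CharP k p]
    [IsPurelyInseparable k K] (hq : di k K p < Cardinal.aleph0) :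
    Module.Finite (pClosure k K p) K := by
  have : CharP K p := charP_of_injective_algebraMap (algebraMap k K).injective p
  obtain ⟨d, hd⟩ := Cardinal.lt_aleph0.1 hq
  refine Module.rank_lt_aleph0_iff.1 ((rank_le (n := p ^ d) fun s hs => ?_).trans_lt
    Cardinal.natCast_lt_aleph0)
  obtain ⟨e, hse⟩ := exists_subset_expleq (k := k) (p := p) s
  obtain ⟨B, hBd, hEB⟩ := exists_finset_of_diCard_le ((diCard_expleq_le_di e).trans hd.le)
  set M := adjoin (pClosure k K p) (B : Set K)
  have hB : ∀ b ∈ B, b ^ p ∈ (⊥ : IntermediateField (pClosure k K p) K) := fun b _ =>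
    mem_bot.2 ⟨⟨_, pow_mem_pClosure p b⟩, rfl⟩
  have : FiniteDimensional (pClosure k K p) M := finiteDimensional_adjoin fun b hb => by
    obtain ⟨c, hc⟩ := mem_bot.1 (hB b hb)
    exact IsIntegral.of_pow hp.out.pos (hc ▸ isIntegral_algebraMap)
  have hsM : Submodule.span (pClosure k K p) (s : Set K) ≤ M.toSubalgebra.toSubmodule :=
    Submodule.span_le.2 fun _ hx => (restrictScalars_adjoin_eq_sup _ _ _).ge (hEB (hse hx))
  calc s.card = finrank (pClosure k K p) (Submodule.span (pClosure k K p) (s : Set K)) :=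
        (finrank_span_finset_eq_card hs).symm
    _ ≤ finrank (pClosure k K p) M := Submodule.finrank_mono hsM
    _ ≤ p ^ B.card := finrank_adjoin_finset_le_pow_card B hB
    _ ≤ p ^ d := Nat.pow_le_pow_right hp.out.pos hBd

end QFinite

section Stabilization

variable {p : ℕ} {k K : Type*} [Field k] [Field K] [Algebra k K]

theorem pow_pow_mem_pnClosure (m : ℕ) (y : K) : y ^ p ^ m ∈ pnClosure k K p m :=
  subset_adjoin _ _ ⟨y, rfl⟩

theorem pnClosure_succ_le (m : ℕ) : pnClosure k K p (m + 1) ≤ pnClosure k K p m :=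
  adjoin_le_iff.2 fun _ ⟨y, hy⟩ => subset_adjoin _ _ ⟨y ^ p, by rw [← hy, ← pow_mul, ← pow_succ']⟩

theorem pnClosure_le_rp_of_succ_eq {m : ℕ} (h : pnClosure k K p (m + 1) = pnClosure k K p m) :
    pnClosure k K p m ≤ rp k K p := by
  have hsucc : pnClosure k K p (m + 1) ≤ pClosureOf p (pnClosure k K p m) :=
    adjoin_le_iff.2 fun _ ⟨y, hy⟩ =>
      subset_adjoin _ _ ⟨y ^ p ^ m, pow_pow_mem_pnClosure m y, by rw [← hy, ← pow_mul, ← pow_succ]⟩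
  exact le_sSup (le_antisymm (adjoin_le_iff.2 fun _ ⟨y, hy, hyx⟩ => hyx ▸ pow_mem hy p)
    (h.ge.trans hsucc))

theorem UnboundedExp.exists_mem_pnClosure (hub : UnboundedExp k K p) (m e : ℕ) :
    ∃ x ∈ pnClosure k K p m, x ^ p ^ e ∉ (algebraMap k K).range := by
  obtain ⟨z, hz⟩ := hub (m + e)
  exact ⟨z ^ p ^ m, pow_pow_mem_pnClosure m z, by rwa [← pow_mul, ← pow_add]⟩

theorem exists_inf_succ_eq_of_antitone {f : ℕ → IntermediateField k K} (hf : Antitone f)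
    (L : IntermediateField k K) [FiniteDimensional k L] : ∃ m, f (m + 1) ⊓ L = f m ⊓ L := by
  let m := Function.argmin fun n => finrank k ↥(f n ⊓ L)
  have hle : f (m + 1) ⊓ L ≤ f m ⊓ L := inf_le_inf_right L (hf m.le_succ)
  have : FiniteDimensional k ↥(f m ⊓ L) :=
    .of_injective (IntermediateField.inclusion inf_le_right).toLinearMap (RingHom.injective _)
  exact ⟨m, eq_of_le_of_finrank_eq hle ((finrank_le_of_le_right hle).antisymm
    (Function.argmin_le (fun n => finrank k ↥(f n ⊓ L)) (m + 1)))⟩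

variable [ExpChar K p]

theorem pow_pow_mem_adjoin_image {T : Set K} {y : K} (n : ℕ) (hy : y ∈ adjoin k T) :
    y ^ p ^ n ∈ adjoin k ((· ^ p ^ n) '' T) := by
  induction hy using IntermediateField.adjoin_induction with
  | mem x hx => exact subset_adjoin _ _ ⟨x, hx, rfl⟩
  | algebraMap c => rw [← map_pow]; exact IntermediateField.algebraMap_mem _ _
  | add a b _ _ ha hb => rw [add_pow_expChar_pow]; exact add_mem ha hb
  | mul a b _ _ ha hb => rw [mul_pow]; exact mul_mem ha hb
  | inv a _ ha => rw [inv_pow]; exact inv_mem ha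

theorem pnClosure_le_sup_adjoin {S : Set K} (hS : adjoin (pClosure k K p) S = ⊤) (m : ℕ) :
    pnClosure k K p m ≤ pnClosure k K p (m + 1) ⊔ adjoin k ((· ^ p ^ m) '' S) := by
  refine adjoin_le_iff.2 fun _ ⟨y, hy⟩ => hy ▸ ?_
  have hyS : y ∈ adjoin k ((pClosure k K p : Set K) ∪ S) := by
    rw [← restrictScalars_adjoin, hS]; trivial
  refine adjoin_le_iff.2 ?_ (pow_pow_mem_adjoin_image m hyS)
  rintro _ ⟨z, hz | hz, rfl⟩
  · refine (le_sup_left : _ ≤ _ ⊔ adjoin k ((· ^ p ^ m) '' S))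
      (adjoin_le_iff.2 ?_ (pow_pow_mem_adjoin_image m hz))
    rintro _ ⟨_, ⟨w, rfl⟩, rfl⟩
    dsimp only
    rw [← pow_mul, ← pow_succ']
    exact pow_pow_mem_pnClosure (m + 1) w
  · exact (le_sup_right : _ ≤ pnClosure k K p (m + 1) ⊔ _) (subset_adjoin _ _ ⟨z, hz, rfl⟩)

theorem exists_pnClosure_succ_eq [Algebra.IsIntegral k K] {S : Set K} (hSfin : S.Finite)
    (hS : adjoin (pClosure k K p) S = ⊤) : ∃ m, pnClosure k K p (m + 1) = pnClosure k K p m := by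
  have : Finite S := hSfin
  have : FiniteDimensional k (adjoin k S) :=
    finiteDimensional_adjoin fun x _ => Algebra.IsIntegral.isIntegral x
  obtain ⟨m, hm⟩ :=
    exists_inf_succ_eq_of_antitone (antitone_nat_of_succ_le pnClosure_succ_le) (adjoin k S)
  refine ⟨m, (pnClosure_succ_le m).antisymm
    ((pnClosure_le_sup_adjoin hS m).trans (sup_le le_rfl (adjoin_le_iff.2 ?_)))⟩
  rintro _ ⟨s, hs, rfl⟩
  exact (hm.ge ⟨pow_pow_mem_pnClosure m s, pow_mem (subset_adjoin _ _ hs) _⟩).1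

end Stabilization

/-- If `K/k` is `q`-finite purely inseparable of unbounded exponent,
then `rp(K/k)` has unbounded exponent over `k`; in particular `rp(K/k) ≠ k`. -/
theorem rp_unboundedExp_of_qFinite
    (p : ℕ) [Fact p.Prime] (k K : Type*) [Field k] [Field K] [Algebra k K] [CharP k p]
    [IsPurelyInseparable k K]
    (hq : di k K p < Cardinal.aleph0)
    (hub : UnboundedExp k K p) :
    (∀ e : ℕ, ∃ x ∈ rp k K p, x ^ p ^ e ∉ (algebraMap k K).range) ∧
      rp k K p ≠ ⊥ := by
  have : CharP K p := charP_of_injective_algebraMap (algebraMap k K).injective p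
  have := finite_pClosure_of_di_lt_aleph0 hq
  obtain ⟨S, hSfin, hS⟩ := fg_def.1 (fg_of_noetherian (⊤ : IntermediateField (pClosure k K p) K))
  obtain ⟨m, hm⟩ := exists_pnClosure_succ_eq hSfin hS
  have hle := pnClosure_le_rp_of_succ_eq hm
  refine ⟨fun e => ?_, fun hbot => ?_⟩
  · obtain ⟨x, hx, hxe⟩ := hub.exists_mem_pnClosure m e
    exact ⟨x, hle hx, hxe⟩
  · obtain ⟨x, hx, hx0⟩ := hub.exists_mem_pnClosure m 0
    rw [pow_zero, pow_one] at hx0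
    exact hx0 (mem_bot.1 (hbot ▸ hle hx))
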